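/- arXiv:1806.10697 — 2 statements merged into one kernel-verified Lean document; each statement's English description precedes it below -/
import Mathlib

section
/- (Lemma: full EURC correctness) Let G be an undirected graph with positive edge costs, root r, revenues ρ ≥ 0, budget B, hop limit H, and let uv ∈ E(G) with u,v ≠ r. Suppose there exist (r,u)- and (r,v)-paths P_{r,u}, P_{r,v} in G with c(P_{r,v}) ≤ c_{uv}, |E(P_{r,v})| ≤ len(r,u)+1, c(P_{r,u}) ≤ c_{uv}, and |E(P_{r,u})| ≤ len(r,v)+1. Then for every feasible STPRBH solution T in G there exists a feasible STPRBH solution T' in G \ uv with ∑_{w∈V(T')} ρ_w ≥ ∑_{w∈V(T)} ρ_w. In particular, the optimal value of STPRBH on G \ uv equals that on G. -/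
/-- A feasible STPRBH solution: a subtree of `G` containing the root `r`
whose nodes all have depth at most `H` and whose total edge cost is at
most `B`. -/
def STPRBHFeasible {V : Type*} [Fintype V] (G : SimpleGraph V)
    (c : Sym2 V → ℝ) (r : V) (B : ℝ) (H : ℕ) (T : G.Subgraph) : Prop :=
  T.coe.IsTree ∧ r ∈ T.verts ∧
  (∀ (hr : r ∈ T.verts) (w : T.verts), T.coe.dist ⟨r, hr⟩ w ≤ H) ∧
  ∑ e ∈ T.edgeSet.toFinite.toFinset, c e ≤ B

/-- Total revenue of a subgraph. -/
noncomputable def STPRBHRevenue {V : Type*} [Fintype V] {G : SimpleGraph V}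
    (ρ : V → ℝ) (T : G.Subgraph) : ℝ :=
  ∑ w ∈ T.verts.toFinite.toFinset, ρ w

/-!
If a feasible tree `T` uses the edge `uv`, orient it so that `u` is not deeper than `v` in `T`;
then `u` is the parent of `v`, and `uv` is replaced by the alternative path `P` from `r` to `v`.
The graph `(T - uv) ∪ P` costs at most `c(T) - c(uv) + c(P) ≤ B`, and each of its vertices is
within `H` hops of `r`: the only tree edge that is lost is bypassed by `P`, whose
`len(r, u) + 1 ≤ depth(u) + 1 = depth(v)` edges do not increase any depth. A shortest-path
spanning tree of this graph is then feasible in `G \ uv` and contains every vertex of `T`. Since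
every solution in `G \ uv` is also one in `G`, the two optimal values agree.
-/

namespace SimpleGraph

section Distance

variable {W : Type*} {U : SimpleGraph W}

lemma Connected.exists_adj_dist_add_one_eq (hU : U.Connected) (r : W) {w : W} (hw : w ≠ r) :
    ∃ x, U.Adj x w ∧ U.dist r x + 1 = U.dist r w := by
  obtain ⟨p, hp⟩ := hU.exists_walk_length_eq_dist w r
  cases p with
  | nil => exact absurd rfl hw
  | @cons _ x _ hwx q =>
    refine ⟨x, hwx.symm, le_antisymm ?_ ?_⟩
    · rw [dist_comm (u := r) (v := w), ← hp, dist_comm]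
      exact Nat.add_le_add_right (U.dist_le q) 1
    · obtain ⟨q', hq'⟩ := hU.exists_walk_length_eq_dist r x
      rw [← hq']
      exact (U.dist_le (q'.concat hwx.symm)).trans (by simp)

def parentGraph (r : W) (p : W → W) : SimpleGraph W :=
  fromEdgeSet (Set.range fun w : {w // w ≠ r} => s(p w, w))

lemma parentGraph_adj {r : W} {p : W → W} {w : W} (hw : w ≠ r) (hpw : p w ≠ w) :
    (parentGraph r p).Adj (p w) w :=
  (fromEdgeSet_adj _).2 ⟨⟨⟨w, hw⟩, rfl⟩, hpw⟩

lemma isTree_parentGraph [Finite W] {r : W} {p : W → W} (d : W → ℕ)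
    (hp : ∀ w, w ≠ r → d (p w) + 1 = d w) (hconn : (parentGraph r p).Connected) :
    (parentGraph r p).IsTree := by
  have := Fintype.ofFinite W
  classical
  let e : {w // w ≠ r} → Sym2 W := fun w => s(p w, w)
  have he_inj : Function.Injective e := by
    rintro ⟨a, ha⟩ ⟨b, hb⟩ hab
    rcases Sym2.eq_iff.1 hab with ⟨-, h⟩ | ⟨hab, hba⟩
    · exact Subtype.ext h
    · have ha' := hp a ha
      have hb' := hp b hb
      simp only at hab hba
      rw [hab] at ha'
      rw [← hba] at hb'
      omega
  have hedges : (parentGraph r p).edgeSet = Set.range e := by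
    refine (edgeSet_fromEdgeSet _).trans (sdiff_eq_left.2 (Set.disjoint_left.2 ?_))
    rintro _ ⟨⟨w, hw⟩, rfl⟩ h
    have hpw : p w = w := Sym2.mk_isDiag_iff.1 h
    have := hp w hw
    rw [hpw] at this
    omega
  rw [isTree_iff_connected_and_card, hedges, Nat.card_range_of_injective he_inj]
  refine ⟨hconn, ?_⟩
  simp only [Nat.card_eq_fintype_card, Fintype.card_subtype_compl, Fintype.card_unique]
  have := Fintype.card_pos (α := W) (h := ⟨r⟩)
  omega

lemma Connected.exists_isTree_le_forall_dist_le [Finite W] (hU : U.Connected) (r : W) :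
    ∃ T ≤ U, T.IsTree ∧ ∀ w, T.dist r w ≤ U.dist r w := by
  -- each `w ≠ r` gets a parent: a neighbour one step closer to `r`
  have hparent (w : W) : ∃ x, w ≠ r → U.Adj x w ∧ U.dist r x + 1 = U.dist r w := by
    by_cases hw : w = r
    · exact ⟨r, fun h => absurd hw h⟩
    · obtain ⟨x, hx⟩ := hU.exists_adj_dist_add_one_eq r hw
      exact ⟨x, fun _ => hx⟩
  choose p hp using hparent
  have hwalk (n : ℕ) :
      ∀ w, U.dist r w = n → ∃ q : (parentGraph r p).Walk r w, q.length = n := by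
    induction n with
    | zero =>
      intro w hw
      obtain rfl := hU.dist_eq_zero_iff.1 hw
      exact ⟨Walk.nil, rfl⟩
    | succ n ih =>
      intro w hw
      have hwr : w ≠ r := by rintro rfl; simp at hw
      obtain ⟨q, hq⟩ := ih (p w) (by have := (hp w hwr).2; omega)
      exact ⟨q.concat (parentGraph_adj hwr (hp w hwr).1.ne), by simp [hq]⟩
  have hconn : (parentGraph r p).Connected := (connected_iff_exists_forall_reachable _).2
    ⟨r, fun w => (hwalk _ w rfl).choose.reachable⟩
  refine ⟨parentGraph r p, ?_, isTree_parentGraph _ (fun w hw => (hp w hw).2) hconn,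
    fun w => ?_⟩
  · rw [parentGraph, fromEdgeSet_le]
    rintro _ ⟨⟨⟨w, hw⟩, rfl⟩, -⟩
    exact (hp w hw).1
  · obtain ⟨q, hq⟩ := hwalk _ w rfl
    exact hq ▸ (parentGraph r p).dist_le q

lemma Connected.exists_walk_length_le_dist_of_adj_or_walk {α β : Type*} {K : SimpleGraph α}
    {L : SimpleGraph β} (hK : K.Connected) (f : α → β) (r : α)
    (h : ∀ y w, K.Adj y w → K.dist r y + 1 = K.dist r w →
      L.Adj (f y) (f w) ∨ ∃ q : L.Walk (f r) (f w), q.length ≤ K.dist r w) (w : α) :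
    ∃ q : L.Walk (f r) (f w), q.length ≤ K.dist r w := by
  suffices ∀ n w, K.dist r w = n → ∃ q : L.Walk (f r) (f w), q.length ≤ n from this _ w rfl
  intro n
  induction n with
  | zero =>
    intro w hw
    obtain rfl := hK.dist_eq_zero_iff.1 hw
    exact ⟨Walk.nil, le_rfl⟩
  | succ n ih =>
    intro w hw
    have hwr : w ≠ r := by rintro rfl; simp at hw
    obtain ⟨y, hyw, hy⟩ := hK.exists_adj_dist_add_one_eq r hwr
    rcases h y w hyw hy with hadj | ⟨q, hq⟩
    · obtain ⟨q, hq⟩ := ih y (by omega)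
      exact ⟨q.concat hadj, by simp only [Walk.length_concat]; omega⟩
    · exact ⟨q, hw ▸ hq⟩

end Distance

lemma Walk.lt_sum_map_edges_of_mem {V : Type*} {G : SimpleGraph V} {c : Sym2 V → ℝ}
    (hc : ∀ e ∈ G.edgeSet, 0 < c e) {a b : V} (p : G.Walk a b) {e : Sym2 V}
    (he : e ∈ p.edges) (hae : a ∉ e) : c e < (p.edges.map c).sum := by
  cases p with
  | nil => simp at he
  | @cons _ x _ hax q =>
    have heq : e ∈ q.edges := by
      rw [Walk.edges_cons, List.mem_cons] at he
      exact he.resolve_left (by rintro rfl; exact hae (Sym2.mem_mk_left a x))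
    have hle : c e ≤ (q.edges.map c).sum :=
      List.single_le_sum (fun x hx => by
        obtain ⟨e', he', rfl⟩ := List.mem_map.1 hx
        exact (hc e' (q.edges_subset_edgeSet he')).le) _ (List.mem_map_of_mem heq)
    have hpos : 0 < c s(a, x) := hc _ hax
    simp only [Walk.edges_cons, List.map_cons, List.sum_cons]
    linarith

namespace Subgraph

variable {V : Type*} {G : SimpleGraph V}

def lift {G' : SimpleGraph V} (T : G.Subgraph) (h : ∀ ⦃a b : V⦄, T.Adj a b → G'.Adj a b) :
    G'.Subgraph where
  verts := T.verts
  Adj := T.Adj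
  adj_sub hab := h hab
  edge_vert := T.edge_vert
  symm := T.symm

def ofLECoe (S : G.Subgraph) (T : SimpleGraph S.verts) (hT : T ≤ S.coe) : G.Subgraph where
  verts := S.verts
  Adj a b := ∃ (ha : a ∈ S.verts) (hb : b ∈ S.verts), T.Adj ⟨a, ha⟩ ⟨b, hb⟩
  adj_sub := fun ⟨_, _, hab⟩ => S.adj_sub (hT hab)
  edge_vert := fun ⟨ha, _, _⟩ => ha
  symm := ⟨fun _ _ ⟨ha, hb, hab⟩ => ⟨hb, ha, hab.symm⟩⟩

lemma coe_ofLECoe (S : G.Subgraph) (T : SimpleGraph S.verts) (hT : T ≤ S.coe) :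
    (S.ofLECoe T hT).coe = T := by
  ext ⟨a, ha⟩ ⟨b, hb⟩
  exact ⟨fun ⟨_, _, hab⟩ => hab, fun hab => ⟨ha, hb, hab⟩⟩

lemma ofLECoe_le (S : G.Subgraph) (T : SimpleGraph S.verts) (hT : T ≤ S.coe) :
    S.ofLECoe T hT ≤ S :=
  ⟨subset_rfl, fun _ _ ⟨_, _, hab⟩ => hT hab⟩

lemma exists_coe_walk_length_eq (S : G.Subgraph) {a b : V} (p : G.Walk a b)
    (hp : ∀ e ∈ p.edges, e ∈ S.edgeSet) (ha : a ∈ S.verts) (hb : b ∈ S.verts) :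
    ∃ q : S.coe.Walk ⟨a, ha⟩ ⟨b, hb⟩, q.length = p.length := by
  induction p with
  | nil => exact ⟨Walk.nil, rfl⟩
  | @cons x y z hxy p ih =>
    have hSxy : S.Adj x y := hp s(x, y) (by simp)
    have hy : y ∈ S.verts := S.edge_vert hSxy.symm
    obtain ⟨q, hq⟩ := ih (fun e he => hp e (by simp [he])) hy hb
    exact ⟨Walk.cons (show S.coe.Adj ⟨x, ha⟩ ⟨y, hy⟩ from hSxy) q, by simp [hq]⟩

lemma dist_le_coe_dist (S : G.Subgraph) {a b : S.verts} (h : S.coe.Reachable a b) :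
    G.dist a b ≤ S.coe.dist a b := by
  obtain ⟨p, hp⟩ := h.exists_walk_length_eq_dist
  have := G.dist_le (p.map S.hom)
  rwa [Walk.length_map, hp] at this

lemma exists_coe_walk_length_le_dist_of_reroute {T S : G.Subgraph} {r : V} (hT : T.coe.Connected)
    (hr : r ∈ T.verts) {u v : V} (huv : T.Adj u v)
    (hd : T.coe.dist ⟨r, hr⟩ ⟨u, T.edge_vert huv⟩ ≤
      T.coe.dist ⟨r, hr⟩ ⟨v, T.edge_vert huv.symm⟩)
    (hTS : T.deleteEdges {s(u, v)} ≤ S) (P : G.Walk r v)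
    (hPS : ∀ e ∈ P.edges, e ∈ S.edgeSet)
    (hP : P.length ≤ T.coe.dist ⟨r, hr⟩ ⟨u, T.edge_vert huv⟩ + 1) (w : T.verts) :
    ∃ q : S.coe.Walk ⟨r, hTS.1 hr⟩ ⟨w, hTS.1 w.2⟩, q.length ≤ T.coe.dist ⟨r, hr⟩ w := by
  refine hT.exists_walk_length_le_dist_of_adj_or_walk (L := S.coe) (Set.inclusion hTS.1)
    ⟨r, hr⟩ ?_ w
  rintro ⟨y, hy⟩ ⟨x, hx⟩ hyx hdyx
  by_cases he : s(y, x) = s(u, v)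
  -- by `hd` the tree edge `uv` leads from `u` down to `v`, and `P` takes its place
  · right
    rcases Sym2.eq_iff.1 he with ⟨rfl, rfl⟩ | ⟨rfl, rfl⟩
    · obtain ⟨q, hq⟩ := S.exists_coe_walk_length_eq P hPS (hTS.1 hr) (hTS.1 hx)
      exact ⟨q, hq ▸ hdyx ▸ hP⟩
    · exact absurd hdyx (by omega)
  · exact Or.inl (hTS.2 ⟨hyx, he⟩)

section Cost

variable [Finite V] {c : Sym2 V → ℝ}

-- `STPRBHFeasible` bounds exactly this sum by `B`.
noncomputable def edgeCost (c : Sym2 V → ℝ) (S : G.Subgraph) : ℝ :=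
  ∑ e ∈ S.edgeSet.toFinite.toFinset, c e

lemma edgeCost_mono {S S' : G.Subgraph} (hc : ∀ e ∈ S'.edgeSet, 0 ≤ c e) (h : S ≤ S') :
    edgeCost c S ≤ edgeCost c S' :=
  Finset.sum_le_sum_of_subset_of_nonneg
    (Set.Finite.toFinset_subset_toFinset.2 (edgeSet_mono h))
    fun e he _ => hc e ((Set.Finite.mem_toFinset _).1 he)

lemma edgeCost_sup_le (hc : ∀ e ∈ G.edgeSet, 0 ≤ c e) (S S' : G.Subgraph) :
    edgeCost c (S ⊔ S') ≤ edgeCost c S + edgeCost c S' := by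
  classical
  have hunion : (S ⊔ S').edgeSet.toFinite.toFinset =
      S.edgeSet.toFinite.toFinset ∪ S'.edgeSet.toFinite.toFinset := by
    ext e; simp [edgeSet_sup]
  have hinter : 0 ≤ ∑ e ∈ S.edgeSet.toFinite.toFinset ∩ S'.edgeSet.toFinite.toFinset, c e :=
    Finset.sum_nonneg fun e he => hc e (S.edgeSet_subset (by simpa using (Finset.mem_inter.1 he).1))
  have := Finset.sum_union_inter (s₁ := S.edgeSet.toFinite.toFinset)
    (s₂ := S'.edgeSet.toFinite.toFinset) (f := c)
  rw [edgeCost, edgeCost, edgeCost, hunion]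
  linarith

lemma edgeCost_deleteEdges_add (S : G.Subgraph) {e : Sym2 V} (he : e ∈ S.edgeSet) :
    edgeCost c (S.deleteEdges {e}) + c e = edgeCost c S := by
  classical
  have : (S.deleteEdges {e}).edgeSet.toFinite.toFinset = S.edgeSet.toFinite.toFinset.erase e := by
    ext e'
    induction e' using Sym2.ind
    simp [and_comm]
  rw [edgeCost, edgeCost, this, Finset.sum_erase_add _ _ ((Set.Finite.mem_toFinset _).2 he)]

lemma edgeCost_toSubgraph_le (hc : ∀ e ∈ G.edgeSet, 0 ≤ c e) {a b : V} (p : G.Walk a b) :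
    edgeCost c p.toSubgraph ≤ (p.edges.map c).sum := by
  classical
  have hset : p.toSubgraph.edgeSet.toFinite.toFinset = p.edges.toFinset := by
    ext e; simp
  rw [edgeCost, hset, Finset.sum_list_map_count]
  refine Finset.sum_le_sum fun e he => ?_
  have hcount : 1 ≤ p.edges.count e := List.count_pos_iff.2 (List.mem_toFinset.1 he)
  rw [nsmul_eq_mul]
  exact le_mul_of_one_le_left (hc e (p.edges_subset_edgeSet (List.mem_toFinset.1 he)))
    (by exact_mod_cast hcount)

lemma edgeCost_deleteEdges_sup_toSubgraph_le (hc : ∀ e ∈ G.edgeSet, 0 ≤ c e) {T : G.Subgraph}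
    {a b : V} (hab : T.Adj a b) {x y : V} (P : G.Walk x y)
    (hP : (P.edges.map c).sum ≤ c s(a, b)) :
    edgeCost c (T.deleteEdges {s(a, b)} ⊔ P.toSubgraph) ≤ edgeCost c T := calc
  _ ≤ edgeCost c (T.deleteEdges {s(a, b)}) + edgeCost c P.toSubgraph := edgeCost_sup_le hc _ _
  _ ≤ edgeCost c (T.deleteEdges {s(a, b)}) + c s(a, b) := by
    gcongr; exact (edgeCost_toSubgraph_le hc P).trans hP
  _ = edgeCost c T := edgeCost_deleteEdges_add T hab

end Cost

end Subgraph

end SimpleGraph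

open SimpleGraph Subgraph

section STPRBH

variable {V : Type*} [Fintype V] {G : SimpleGraph V} {c : Sym2 V → ℝ} {r : V} {B : ℝ}
  {H : ℕ}

lemma STPRBHFeasible.lift {G' : SimpleGraph V} {T : G.Subgraph} (hT : STPRBHFeasible G c r B H T)
    (h : ∀ ⦃a b : V⦄, T.Adj a b → G'.Adj a b) : STPRBHFeasible G' c r B H (T.lift h) :=
  hT

lemma STPRBHRevenue_le_of_verts_subset {G' : SimpleGraph V} {ρ : V → ℝ}
    (hρ : ∀ v, 0 ≤ ρ v)
    {T : G.Subgraph} {T' : G'.Subgraph} (h : T.verts ⊆ T'.verts) :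
    STPRBHRevenue ρ T ≤ STPRBHRevenue ρ T' :=
  Finset.sum_le_sum_of_subset_of_nonneg (Set.Finite.toFinset_subset_toFinset.2 h)
    fun v _ _ => hρ v

theorem exists_feasible_le_of_forall_walk (S : G.Subgraph) (hc : ∀ e ∈ S.edgeSet, 0 ≤ c e)
    (hr : r ∈ S.verts) (hS : ∀ w : S.verts, ∃ p : S.coe.Walk ⟨r, hr⟩ w, p.length ≤ H)
    (hcost : edgeCost c S ≤ B) :
    ∃ T ≤ S, STPRBHFeasible G c r B H T ∧ T.verts = S.verts := by
  have hconn : S.coe.Connected := (connected_iff_exists_forall_reachable _).2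
    ⟨⟨r, hr⟩, fun w => (hS w).choose.reachable⟩
  obtain ⟨T, hTS, hT, hdist⟩ := hconn.exists_isTree_le_forall_dist_le ⟨r, hr⟩
  refine ⟨S.ofLECoe T hTS, ofLECoe_le .., ⟨?_, hr, fun _ w => ?_, ?_⟩, rfl⟩
  · rwa [coe_ofLECoe]
  · obtain ⟨p, hp⟩ := hS w
    rw [coe_ofLECoe]
    exact (hdist w).trans ((S.coe.dist_le p).trans hp)
  · exact (edgeCost_mono hc (ofLECoe_le ..)).trans hcost

theorem exists_feasible_notMem_edgeSet_of_reroute (hc : ∀ e ∈ G.edgeSet, 0 < c e) {u v : V}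
    (hur : u ≠ r) (hvr : v ≠ r) (P : G.Walk r v) (hcP : (P.edges.map c).sum ≤ c s(u, v))
    (hlP : P.length ≤ G.dist r u + 1) {T : G.Subgraph} (hT : STPRBHFeasible G c r B H T)
    (huv : T.Adj u v)
    (hd : T.coe.dist ⟨r, hT.2.1⟩ ⟨u, T.edge_vert huv⟩ ≤
      T.coe.dist ⟨r, hT.2.1⟩ ⟨v, T.edge_vert huv.symm⟩) :
    ∃ T₀ : G.Subgraph, STPRBHFeasible G c r B H T₀ ∧ s(u, v) ∉ T₀.edgeSet ∧
      T.verts ⊆ T₀.verts := by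
  classical
  obtain ⟨hTtree, hr, hdepth, hcost⟩ := hT
  have hc₀ : ∀ e ∈ G.edgeSet, 0 ≤ c e := fun e he => (hc e he).le
  let S := T.deleteEdges {s(u, v)} ⊔ P.toSubgraph
  have hPuv : s(u, v) ∉ P.edges := fun h =>
    (P.lt_sum_map_edges_of_mem hc h (by simp [hur.symm, hvr.symm])).not_ge hcP
  have hSuv : s(u, v) ∉ S.edgeSet := by
    simp [S, Subgraph.edgeSet_sup, Walk.edgeSet_toSubgraph, hPuv]
  have hPS : ∀ e ∈ P.edges, e ∈ S.edgeSet := fun e he =>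
    edgeSet_mono le_sup_right (P.mem_edges_toSubgraph.2 he)
  have hdu : G.dist r u ≤ T.coe.dist ⟨r, hr⟩ ⟨u, T.edge_vert huv⟩ :=
    T.dist_le_coe_dist (hTtree.connected ⟨r, hr⟩ ⟨u, T.edge_vert huv⟩)
  have hdv : T.coe.dist ⟨r, hr⟩ ⟨v, T.edge_vert huv.symm⟩ =
      T.coe.dist ⟨r, hr⟩ ⟨u, T.edge_vert huv⟩ + 1 := by
    have hadj : T.coe.Adj ⟨u, T.edge_vert huv⟩ ⟨v, T.edge_vert huv.symm⟩ := huv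
    rcases hTtree.dist_eq_dist_add_one_of_adj ⟨r, hr⟩ hadj with h | h <;> omega
  have hPH : P.length ≤ H := by
    have := hdepth hr ⟨v, T.edge_vert huv.symm⟩
    omega
  have hSdepth (w : S.verts) : ∃ q : S.coe.Walk ⟨r, Or.inl hr⟩ w, q.length ≤ H := by
    obtain ⟨w, hw | hw⟩ := w
    · obtain ⟨q, hq⟩ := exists_coe_walk_length_le_dist_of_reroute hTtree.connected hr huv hd
        le_sup_left P hPS (by omega) ⟨w, hw⟩
      exact ⟨q, hq.trans (hdepth hr _)⟩
    · have hwP : w ∈ P.support := P.mem_verts_toSubgraph.1 hw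
      obtain ⟨q, hq⟩ := S.exists_coe_walk_length_eq (P.takeUntil w hwP)
        (fun e he => hPS e (P.edges_takeUntil_subset_edges hwP he)) (Or.inl hr) (Or.inr hw)
      exact ⟨q, hq ▸ (P.length_takeUntil_le_length hwP).trans hPH⟩
  have hScost : edgeCost c S ≤ B :=
    (edgeCost_deleteEdges_sup_toSubgraph_le hc₀ huv P hcP).trans hcost
  obtain ⟨T₀, hT₀S, hT₀, hverts⟩ := exists_feasible_le_of_forall_walk S
    (fun e he => hc₀ e (S.edgeSet_subset he)) (Or.inl hr) hSdepth hScost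
  exact ⟨T₀, hT₀, fun h => hSuv (edgeSet_mono hT₀S h), hverts ▸ fun w hw => Or.inl hw⟩

theorem exists_feasible_deleteEdges_verts_subset (hc : ∀ e ∈ G.edgeSet, 0 < c e) {u v : V}
    (hur : u ≠ r) (hvr : v ≠ r) (Pru : G.Walk r u) (Prv : G.Walk r v)
    (hcPrv : (Prv.edges.map c).sum ≤ c s(u, v)) (hlPrv : Prv.length ≤ G.dist r u + 1)
    (hcPru : (Pru.edges.map c).sum ≤ c s(u, v)) (hlPru : Pru.length ≤ G.dist r v + 1)
    {T : G.Subgraph} (hT : STPRBHFeasible G c r B H T) :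
    ∃ T' : (G.deleteEdges {s(u, v)}).Subgraph,
      STPRBHFeasible (G.deleteEdges {s(u, v)}) c r B H T' ∧ T.verts ⊆ T'.verts := by
  suffices ∃ T₀ : G.Subgraph, STPRBHFeasible G c r B H T₀ ∧ s(u, v) ∉ T₀.edgeSet ∧
      T.verts ⊆ T₀.verts by
    obtain ⟨T₀, hT₀, huv, hverts⟩ := this
    have hadj ⦃a b : V⦄ (hab : T₀.Adj a b) : (G.deleteEdges {s(u, v)}).Adj a b :=
      (SimpleGraph.deleteEdges_adj ..).2
        ⟨T₀.adj_sub hab, fun h => huv (Set.mem_singleton_iff.1 h ▸ hab)⟩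
    exact ⟨T₀.lift hadj, hT₀.lift hadj, hverts⟩
  by_cases huv : T.Adj u v
  · rcases le_total (T.coe.dist ⟨r, hT.2.1⟩ ⟨u, T.edge_vert huv⟩)
      (T.coe.dist ⟨r, hT.2.1⟩ ⟨v, T.edge_vert huv.symm⟩) with hd | hd
    · exact exists_feasible_notMem_edgeSet_of_reroute hc hur hvr Prv hcPrv hlPrv hT huv hd
    · rw [Sym2.eq_swap]
      exact exists_feasible_notMem_edgeSet_of_reroute hc hvr hur Pru (Sym2.eq_swap ▸ hcPru)
        hlPru hT huv.symm hd
  · exact ⟨T, hT, huv, subset_rfl⟩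

end STPRBH

theorem stmt_11_general {V : Type*} [Fintype V] (G : SimpleGraph V)
    (c : Sym2 V → ℝ) (hc : ∀ e ∈ G.edgeSet, 0 < c e)
    (ρ : V → ℝ) (hρ : ∀ v, 0 ≤ ρ v) (r : V) (B : ℝ) (H : ℕ)
    (u v : V) (hur : u ≠ r) (hvr : v ≠ r)
    (Pru : G.Walk r u)
    (Prv : G.Walk r v)
    (hcPrv : (Prv.edges.map c).sum ≤ c s(u, v))
    (hlPrv : Prv.length ≤ G.dist r u + 1)
    (hcPru : (Pru.edges.map c).sum ≤ c s(u, v))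
    (hlPru : Pru.length ≤ G.dist r v + 1) :
    (∀ T : G.Subgraph, STPRBHFeasible G c r B H T →
      ∃ T' : (G.deleteEdges {s(u, v)}).Subgraph,
        STPRBHFeasible (G.deleteEdges {s(u, v)}) c r B H T' ∧
        STPRBHRevenue ρ T ≤ STPRBHRevenue ρ T') ∧
    sSup {x : ℝ | ∃ T' : (G.deleteEdges {s(u, v)}).Subgraph,
        STPRBHFeasible (G.deleteEdges {s(u, v)}) c r B H T' ∧
        STPRBHRevenue ρ T' = x} =
      sSup {x : ℝ | ∃ T : G.Subgraph,
        STPRBHFeasible G c r B H T ∧ STPRBHRevenue ρ T = x} := by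
  have hdelete {T : G.Subgraph} (hT : STPRBHFeasible G c r B H T) :=
    exists_feasible_deleteEdges_verts_subset hc hur hvr Pru Prv hcPrv hlPrv hcPru hlPru hT
  refine ⟨fun T hT => ?_, csSup_eq_csSup_of_forall_exists_le ?_ ?_⟩
  · obtain ⟨T', hT', hverts⟩ := hdelete hT
    exact ⟨T', hT', STPRBHRevenue_le_of_verts_subset hρ hverts⟩
  · rintro _ ⟨T', hT', rfl⟩
    have hadj ⦃a b : V⦄ (hab : T'.Adj a b) : G.Adj a b := (T'.adj_sub hab).1
    exact ⟨_, ⟨T'.lift hadj, hT'.lift hadj, rfl⟩, le_rfl⟩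
  · rintro _ ⟨T, hT, rfl⟩
    obtain ⟨T', hT', hverts⟩ := hdelete hT
    exact ⟨_, ⟨T', hT', rfl⟩, STPRBHRevenue_le_of_verts_subset hρ hverts⟩

/-- full EURC correctness: If the edge `uv` (with `u,v ≠ r`)
admits alternate paths `P_{r,u}` and `P_{r,v}` with cost at most `c uv` and
with hop lengths at most `len(r,v)+1` and `len(r,u)+1` respectively, then for
every feasible STPRBH solution in `G` there is a feasible solution in
`G \ uv` with at least the same revenue; in particular the optimal values of
STPRBH on `G` and on `G \ uv` coincide. -/
theorem stmt_11 {V : Type*} [Fintype V] (G : SimpleGraph V)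
    (c : Sym2 V → ℝ) (hc : ∀ e ∈ G.edgeSet, 0 < c e)
    (ρ : V → ℝ) (hρ : ∀ v, 0 ≤ ρ v) (r : V) (B : ℝ) (H : ℕ)
    (u v : V) (hur : u ≠ r) (hvr : v ≠ r) (huv : G.Adj u v)
    (Pru : G.Walk r u) (hPru : Pru.IsPath)
    (Prv : G.Walk r v) (hPrv : Prv.IsPath)
    (hcPrv : (Prv.edges.map c).sum ≤ c s(u, v))
    (hlPrv : Prv.length ≤ G.dist r u + 1)
    (hcPru : (Pru.edges.map c).sum ≤ c s(u, v))
    (hlPru : Pru.length ≤ G.dist r v + 1) :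
    (∀ T : G.Subgraph, STPRBHFeasible G c r B H T →
      ∃ T' : (G.deleteEdges {s(u, v)}).Subgraph,
        STPRBHFeasible (G.deleteEdges {s(u, v)}) c r B H T' ∧
        STPRBHRevenue ρ T ≤ STPRBHRevenue ρ T') ∧
    sSup {x : ℝ | ∃ T' : (G.deleteEdges {s(u, v)}).Subgraph,
        STPRBHFeasible (G.deleteEdges {s(u, v)}) c r B H T' ∧
        STPRBHRevenue ρ T' = x} =
      sSup {x : ℝ | ∃ T : G.Subgraph,
        STPRBHFeasible G c r B H T ∧ STPRBHRevenue ρ T = x} :=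
  stmt_11_general G c hc ρ hρ r B H u v hur hvr Pru Prv hcPrv hlPrv hcPru hlPru
end

section
/- Let G be a graph with positive edge costs, root r, and suppose edge uw (u,w ≠ r) is deleted because there exist (r,u)- and (r,w)-paths P_{r,u}, P_{r,w} with c(P_{r,w}) ≤ c_{uw}, |E(P_{r,w})| ≤ len(r,u)+1 and symmetrically for P_{r,u}. Assume additionally that P_{r,w} survives in the reduced graph G' = G \ uw. Then for every node v, the unweighted distance from r to v in G' equals len(r,v), the unweighted distance in G. -/
open SimpleGraph

private lemma helper13 {V : Type*} {G : SimpleGraph V} {u w v : V} (huw : u ≠ w)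
    (q : G.Walk w v) (hq : q.IsPath) (he : s(u,w) ∈ q.edges) :
    ∃ q' : G.Walk u v, s(u,w) ∉ q'.edges ∧ q'.length + 1 = q.length := by
  cases q with
  | nil => simp at he
  | cons h q'' =>
    rename_i x
    rw [SimpleGraph.Walk.edges_cons, List.mem_cons] at he
    have hwsup : w ∉ q''.support := by
      have := hq.support_nodup
      simp only [SimpleGraph.Walk.support_cons, List.nodup_cons] at this
      exact this.1
    rcases he with he | he
    · have hx : x = u := by
        rw [Sym2.eq_iff] at he
        rcases he with ⟨h1, h2⟩ | ⟨h1, h2⟩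
        · exact absurd h1 huw
        · exact h1.symm
      subst hx
      refine ⟨q'', ?_, by simp⟩
      intro hmem
      exact hwsup (SimpleGraph.Walk.snd_mem_support_of_mem_edges q'' hmem)
    · exact absurd (SimpleGraph.Walk.snd_mem_support_of_mem_edges q'' he) hwsup

/-- If the edge `uw` (with `u, w ≠ r`) is deleted by the EURC
test and the alternate paths `P_{r,u}`, `P_{r,w}` survive in the reduced
graph `G' = G \ uw` (with cost at most `c uw` and hop lengths at most
`len(r,w)+1` and `len(r,u)+1` respectively), then the unweighted distance
from `r` to every node `v` is the same in `G'` as in `G`. -/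
theorem stmt_13 {V : Type*} [Fintype V] (G : SimpleGraph V)
    (c : Sym2 V → ℝ) (hc : ∀ e ∈ G.edgeSet, 0 < c e)
    (r u w : V) (hur : u ≠ r) (hwr : w ≠ r) (huw : G.Adj u w)
    (Pru : (G.deleteEdges {s(u, w)}).Walk r u) (hPru : Pru.IsPath)
    (Prw : (G.deleteEdges {s(u, w)}).Walk r w) (hPrw : Prw.IsPath)
    (hcPrw : (Prw.edges.map c).sum ≤ c s(u, w))
    (hlPrw : Prw.length ≤ G.dist r u + 1)
    (hcPru : (Pru.edges.map c).sum ≤ c s(u, w))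
    (hlPru : Pru.length ≤ G.dist r w + 1) :
    ∀ v : V, (G.deleteEdges {s(u, w)}).dist r v = G.dist r v := by
  classical
  intro v
  have hle : G.deleteEdges {s(u, w)} ≤ G := G.deleteEdges_le _
  by_cases hreach : G.Reachable r v
  · -- get shortest path in G
    obtain ⟨p, hp, hplen⟩ := hreach.exists_path_of_dist
    -- construct walk in G' of length ≤ p.length
    have key : ∃ q : (G.deleteEdges {s(u, w)}).Walk r v, q.length ≤ p.length := by
      by_cases he : s(u,w) ∈ p.edges
      · have hwsup : w ∈ p.support := SimpleGraph.Walk.snd_mem_support_of_mem_edges p he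
        have hspec := p.take_spec hwsup
        have hlen : (p.takeUntil w hwsup).length + (p.dropUntil w hwsup).length = p.length := by
          have := congrArg SimpleGraph.Walk.length hspec
          rwa [SimpleGraph.Walk.length_append] at this
        have hedges : p.edges = (p.takeUntil w hwsup).edges ++ (p.dropUntil w hwsup).edges := by
          conv_lhs => rw [← hspec]
          exact SimpleGraph.Walk.edges_append _ _
        by_cases hdrop : s(u,w) ∈ (p.dropUntil w hwsup).edges
        · -- case B: use Pru ++ q'
          obtain ⟨q', hq'e, hq'l⟩ := helper13 huw.ne (p.dropUntil w hwsup)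
            (hp.dropUntil hwsup) hdrop
          refine ⟨Pru.append (q'.toDeleteEdges {s(u,w)} (fun e hmem he2 => hq'e (Set.mem_singleton_iff.mp he2 ▸ hmem))), ?_⟩
          rw [SimpleGraph.Walk.length_append, SimpleGraph.Walk.length_transfer]
          have h1 : G.dist r w ≤ (p.takeUntil w hwsup).length :=
            SimpleGraph.dist_le _
          omega
        · -- case A: edge in prefix; use Prw ++ dropUntil
          have htake : s(u,w) ∈ (p.takeUntil w hwsup).edges := by
            rw [hedges, List.mem_append] at he
            tauto
          have htakerev : s(u,w) ∈ (p.takeUntil w hwsup).reverse.edges := by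
            rw [SimpleGraph.Walk.edges_reverse, List.mem_reverse]; exact htake
          obtain ⟨q', hq'e, hq'l⟩ := helper13 huw.ne (p.takeUntil w hwsup).reverse
            ((hp.takeUntil hwsup).reverse) htakerev
          refine ⟨Prw.append ((p.dropUntil w hwsup).toDeleteEdges {s(u,w)}
            (fun e hmem he2 => hdrop (Set.mem_singleton_iff.mp he2 ▸ hmem))), ?_⟩
          rw [SimpleGraph.Walk.length_append, SimpleGraph.Walk.length_transfer]
          have h1 : G.dist r u ≤ q'.length := by
            have := SimpleGraph.dist_le q'.reverse
            simpa [SimpleGraph.Walk.length_reverse] using this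
          rw [SimpleGraph.Walk.length_reverse] at hq'l
          omega
      · exact ⟨p.toDeleteEdges {s(u,w)} (fun e hmem he2 => he (Set.mem_singleton_iff.mp he2 ▸ hmem)), by
          rw [SimpleGraph.Walk.length_transfer]⟩
    obtain ⟨q, hq⟩ := key
    have h1 : (G.deleteEdges {s(u, w)}).dist r v ≤ G.dist r v := le_trans (SimpleGraph.dist_le q) (hplen ▸ hq)
    have hreach' : (G.deleteEdges {s(u, w)}).Reachable r v := ⟨q⟩
    obtain ⟨q2, hq2, hq2len⟩ := hreach'.exists_path_of_dist
    have h2 : G.dist r v ≤ (G.deleteEdges {s(u, w)}).dist r v := by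
      have := SimpleGraph.dist_le (q2.mapLe hle)
      rwa [SimpleGraph.Walk.length_map, hq2len] at this
    omega
  · have hreach' : ¬ (G.deleteEdges {s(u, w)}).Reachable r v := fun ⟨q⟩ => hreach ⟨q.mapLe hle⟩
    rw [SimpleGraph.dist_eq_zero_of_not_reachable hreach,
      SimpleGraph.dist_eq_zero_of_not_reachable hreach']
end
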